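/- arXiv:2107.04645 — 8 statements merged into one kernel-verified Lean document; each statement's English description precedes it below -/
import Mathlib

section
/- Every element of K ≀_Γ H can be written as a finite product of pairwise disjoint wreath cycles in K ≀_Γ Sym(Γ). Explicitly, if w = (f,h) and h = h_1⋯h_ℓ is the disjoint cycle decomposition of h, then w = ∏_{i=1}^ℓ (f|_{supp(h_i)}, h_i) · ∏_{γ ∈ fix(h) ∩ terr(w)} (f|_{{γ}}, 1). -/
set_option linter.unusedSectionVars false

/-- The wreath product `K ≀_Γ Sym(Γ)` (with right-action conventions from the paper):
multiplication `(f,h)(e,g) = (f · e^{h⁻¹}, hg)` where `[γ](f·e^{h⁻¹}) = [γ]f * [γ^h]e`. -/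
structure Wr (K : Type*) (Γ : Type*) where
  base : Γ → K
  top : Equiv.Perm Γ

namespace Wr

variable {K Γ : Type*} [Group K]

theorem ext' {w v : Wr K Γ} (h1 : w.base = v.base) (h2 : w.top = v.top) : w = v := by
  cases w; cases v; cases h1; cases h2; rfl

instance : Group (Wr K Γ) where
  mul w v := ⟨fun γ => w.base γ * v.base (w.top γ), w.top.trans v.top⟩
  one := ⟨fun _ => 1, 1⟩
  inv w := ⟨fun γ => (w.base (w.top⁻¹ γ))⁻¹, w.top⁻¹⟩
  mul_assoc a b c := ext' (funext fun γ => mul_assoc _ _ _) (Equiv.trans_assoc _ _ _)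
  one_mul a := ext' (funext fun γ => one_mul _) (Equiv.refl_trans _)
  mul_one a := ext' (funext fun γ => mul_one _) (Equiv.trans_refl _)
  inv_mul_cancel a := ext' (funext fun γ => inv_mul_cancel _) (Equiv.symm_trans_self _)

/-- The support of a permutation, as a set. -/
def psupp (h : Equiv.Perm Γ) : Set Γ := {γ | h γ ≠ γ}

/-- The territory of a wreath product element. -/
def terr (w : Wr K Γ) : Set Γ := psupp w.top ∪ {γ | w.base γ ≠ 1}

/-- Wreath cycles: either trivial top and a singleton territory, or the top is a
single nontrivial cycle and the territory equals its support. -/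
def IsWreathCycle (w : Wr K Γ) : Prop :=
  (w.top = 1 ∧ ∃ γ₀, terr w = {γ₀}) ∨ (w.top.IsCycle ∧ terr w = psupp w.top)

/-- The yade of `w` at `γ`: the ordered product `∏_{i=0}^{|h|-1} [γ^{h^i}]f`. -/
noncomputable def yade (w : Wr K Γ) (γ : Γ) : K :=
  ((List.range (orderOf w.top)).map fun i => w.base ((w.top ^ i) γ)).prod

end Wr

open Wr

/-! At a point of the territory of one of several pairwise disjoint elements, their product
acts as that element alone, since each element maps its territory into itself; elsewhere it acts
trivially. So disjoint elements multiply to `w` as soon as each agrees with `w` on its own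
territory and together they cover `terr w`, which the cycle parts and the fixed-point parts of `w`
do. -/

namespace Wr

variable {K Γ : Type*} [Group K]

@[simp]
lemma mul_base (w v : Wr K Γ) (γ : Γ) : (w * v).base γ = w.base γ * v.base (w.top γ) := rfl

@[simp]
lemma mul_top_apply (w v : Wr K Γ) (γ : Γ) : (w * v).top γ = v.top (w.top γ) := rfl

lemma notMem_terr_iff {z : Wr K Γ} {γ : Γ} : γ ∉ terr z ↔ z.base γ = 1 ∧ z.top γ = γ := by
  simp [terr, psupp, and_comm]

lemma top_apply_mem_terr {z : Wr K Γ} {γ : Γ} (h : γ ∈ terr z) : z.top γ ∈ terr z := by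
  by_cases hγ : z.top γ = γ
  · rwa [hγ]
  · exact Or.inl fun h' => hγ (z.top.injective h')

lemma list_prod_apply_of_forall_notMem_terr {l : List (Wr K Γ)} {γ : Γ}
    (h : ∀ z ∈ l, γ ∉ terr z) : l.prod.base γ = 1 ∧ l.prod.top γ = γ := by
  induction l with
  | nil => exact ⟨rfl, rfl⟩
  | cons z t ih =>
    obtain ⟨hz_base, hz_top⟩ := notMem_terr_iff.mp (h z List.mem_cons_self)
    obtain ⟨ht_base, ht_top⟩ := ih fun v hv => h v (List.mem_cons_of_mem _ hv)
    simp [hz_base, hz_top, ht_base, ht_top]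

lemma list_prod_apply_of_mem_terr {l : List (Wr K Γ)}
    (hl : l.Pairwise fun z v => Disjoint (terr z) (terr v)) {z : Wr K Γ} (hz : z ∈ l) {γ : Γ}
    (hγ : γ ∈ terr z) : l.prod.base γ = z.base γ ∧ l.prod.top γ = z.top γ := by
  induction l with
  | nil => simp at hz
  | cons v t ih =>
    rw [List.pairwise_cons] at hl
    rcases List.mem_cons.mp hz with rfl | hz
    · have hrest := list_prod_apply_of_forall_notMem_terr (l := t) fun u hu =>
        Set.disjoint_left.mp (hl.1 u hu) (top_apply_mem_terr hγ)
      simp [hrest.1, hrest.2]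
    · obtain ⟨hv_base, hv_top⟩ :=
        notMem_terr_iff.mp (Set.disjoint_right.mp (hl.1 z hz) hγ)
      simp [hv_base, hv_top, ih hl.2 hz]

lemma list_prod_eq_of_pairwise_disjoint {l : List (Wr K Γ)} {w : Wr K Γ}
    (hl : l.Pairwise fun z v => Disjoint (terr z) (terr v))
    (hagree : ∀ z ∈ l, ∀ γ ∈ terr z, z.base γ = w.base γ ∧ z.top γ = w.top γ)
    (hcover : ∀ γ ∈ terr w, ∃ z ∈ l, γ ∈ terr z) : l.prod = w := by
  suffices h : ∀ γ, l.prod.base γ = w.base γ ∧ l.prod.top γ = w.top γ from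
    ext' (funext fun γ => (h γ).1) (Equiv.ext fun γ => (h γ).2)
  intro γ
  by_cases hγ : ∃ z ∈ l, γ ∈ terr z
  · obtain ⟨z, hz, hγz⟩ := hγ
    obtain ⟨h_base, h_top⟩ := list_prod_apply_of_mem_terr hl hz hγz
    obtain ⟨hw_base, hw_top⟩ := hagree z hz γ hγz
    exact ⟨h_base.trans hw_base, h_top.trans hw_top⟩
  · obtain ⟨hw_base, hw_top⟩ := notMem_terr_iff.mp fun h => hγ (hcover γ h)
    obtain ⟨h_base, h_top⟩ :=
      list_prod_apply_of_forall_notMem_terr fun z hz hγz => hγ ⟨z, hz, hγz⟩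
    exact ⟨h_base.trans hw_base.symm, h_top.trans hw_top.symm⟩

section Decomposition

variable [DecidableEq Γ]

/-- The factor `(f|_{supp c}, c)` of `w = (f, h)` for a cycle `c` of `h`. -/
def cyclePart (w : Wr K Γ) (c : Equiv.Perm Γ) : Wr K Γ :=
  ⟨fun γ => if c γ ≠ γ then w.base γ else 1, c⟩

/-- The factor `(f|_{γ₀}, 1)` of `w = (f, h)` for a fixed point `γ₀` of `h`. -/
def pointPart (w : Wr K Γ) (γ₀ : Γ) : Wr K Γ :=
  ⟨fun γ => if γ = γ₀ then w.base γ else 1, 1⟩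

lemma terr_cyclePart (w : Wr K Γ) (c : Equiv.Perm Γ) : terr (cyclePart w c) = psupp c := by
  ext γ
  by_cases hγ : c γ = γ <;> simp [terr, psupp, cyclePart, hγ]

lemma terr_pointPart_subset (w : Wr K Γ) (γ₀ : Γ) : terr (pointPart w γ₀) ⊆ {γ₀} := by
  intro γ hγ
  by_contra hne
  simp_all [terr, psupp, pointPart]

lemma terr_pointPart {w : Wr K Γ} {γ₀ : Γ} (h : w.base γ₀ ≠ 1) :
    terr (pointPart w γ₀) = {γ₀} :=
  (terr_pointPart_subset w γ₀).antisymm <| by simpa [terr, psupp, pointPart] using h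

variable [Fintype Γ]

lemma coe_support_eq_psupp (c : Equiv.Perm Γ) : (c.support : Set Γ) = psupp c :=
  c.coe_support_eq_set_support

open scoped Classical in
noncomputable def cycleDecomposition (w : Wr K Γ) : List (Wr K Γ) :=
  w.top.cycleFactorsFinset.toList.map (cyclePart w)
    ++ (Finset.univ.filter fun γ => w.top γ = γ ∧ w.base γ ≠ 1).toList.map (pointPart w)

lemma mem_cycleDecomposition {w z : Wr K Γ} :
    z ∈ cycleDecomposition w ↔ (∃ c ∈ w.top.cycleFactorsFinset, cyclePart w c = z) ∨
      ∃ γ₀, (w.top γ₀ = γ₀ ∧ w.base γ₀ ≠ 1) ∧ pointPart w γ₀ = z := by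
  simp [cycleDecomposition]

lemma isWreathCycle_of_mem_cycleDecomposition {w z : Wr K Γ} (hz : z ∈ cycleDecomposition w) :
    IsWreathCycle z := by
  rcases mem_cycleDecomposition.mp hz with ⟨c, hc, rfl⟩ | ⟨γ₀, ⟨-, hγ₀⟩, rfl⟩
  · exact Or.inr ⟨(Equiv.Perm.mem_cycleFactorsFinset_iff.mp hc).1, terr_cyclePart w c⟩
  · exact Or.inl ⟨rfl, γ₀, terr_pointPart hγ₀⟩

lemma pairwise_disjoint_cycleDecomposition (w : Wr K Γ) :
    (cycleDecomposition w).Pairwise fun z v => Disjoint (terr z) (terr v) := by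
  simp only [cycleDecomposition, List.pairwise_append, List.pairwise_map, List.mem_map,
    Finset.mem_toList, Finset.mem_filter, Finset.mem_univ, true_and]
  refine ⟨?cycles, ?points, ?mixed⟩
  case cycles =>
    refine (Finset.nodup_toList _).pairwise_of_forall_ne fun c hc c' hc' hne => ?_
    rw [terr_cyclePart, terr_cyclePart, ← coe_support_eq_psupp, ← coe_support_eq_psupp,
      Finset.disjoint_coe, ← Equiv.Perm.disjoint_iff_disjoint_support]
    exact w.top.cycleFactorsFinset_pairwise_disjoint (Finset.mem_toList.mp hc)
      (Finset.mem_toList.mp hc') hne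
  case points =>
    refine (Finset.nodup_toList _).pairwise_of_forall_ne fun γ₀ _ γ₁ _ hne => ?_
    exact (Set.disjoint_singleton.mpr hne).mono (terr_pointPart_subset w γ₀)
      (terr_pointPart_subset w γ₁)
  case mixed =>
    rintro _ ⟨c, hc, rfl⟩ _ ⟨γ₀, ⟨hfix, -⟩, rfl⟩
    refine Set.disjoint_of_subset_right (terr_pointPart_subset w γ₀) ?_
    rw [Set.disjoint_singleton_right, terr_cyclePart, ← coe_support_eq_psupp, Finset.mem_coe]
    exact fun hγ₀ => Equiv.Perm.mem_support.mp
      (Equiv.Perm.mem_cycleFactorsFinset_support_le hc hγ₀) hfix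

lemma prod_cycleDecomposition (w : Wr K Γ) : (cycleDecomposition w).prod = w := by
  refine list_prod_eq_of_pairwise_disjoint (pairwise_disjoint_cycleDecomposition w) ?_ ?_
  · intro z hz γ hγ
    rcases mem_cycleDecomposition.mp hz with ⟨c, hc, rfl⟩ | ⟨γ₀, ⟨hfix, -⟩, rfl⟩
    · rw [terr_cyclePart] at hγ
      exact ⟨if_pos hγ, (Equiv.Perm.mem_cycleFactorsFinset_iff.mp hc).2 γ
        (Equiv.Perm.mem_support.mpr hγ)⟩
    · obtain rfl := terr_pointPart_subset w γ₀ hγ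
      exact ⟨if_pos rfl, hfix.symm⟩
  · intro γ hγ
    by_cases hmoved : w.top γ = γ
    · have hbase : w.base γ ≠ 1 := fun h => notMem_terr_iff.mpr ⟨h, hmoved⟩ hγ
      exact ⟨pointPart w γ, mem_cycleDecomposition.mpr (Or.inr ⟨γ, ⟨hmoved, hbase⟩, rfl⟩),
        terr_pointPart hbase ▸ Set.mem_singleton γ⟩
    · have hsupp : γ ∈ w.top.support := Equiv.Perm.mem_support.mpr hmoved
      refine ⟨cyclePart w (w.top.cycleOf γ), mem_cycleDecomposition.mpr
        (Or.inl ⟨_, Equiv.Perm.cycleOf_mem_cycleFactorsFinset_iff.mpr hsupp, rfl⟩), ?_⟩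
      rw [terr_cyclePart, ← coe_support_eq_psupp, Finset.mem_coe,
        Equiv.Perm.mem_support_cycleOf_iff]
      exact ⟨Equiv.Perm.SameCycle.refl _ _, hsupp⟩

end Decomposition

end Wr

open scoped Classical in
theorem wreathCycle_decomposition_general {K Γ : Type*} [Group K] [Fintype Γ] [DecidableEq Γ]
    (w : Wr K Γ) :
    ∀ l : List (Wr K Γ),
      l = (w.top.cycleFactorsFinset.toList.map fun c =>
            Wr.mk (fun γ => if c γ ≠ γ then w.base γ else 1) c)
          ++ ((Finset.univ.filter fun γ => w.top γ = γ ∧ w.base γ ≠ 1).toList.map fun γ₀ =>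
            Wr.mk (fun γ => if γ = γ₀ then w.base γ else 1) 1) →
      (∀ z ∈ l, IsWreathCycle z) ∧
        l.Pairwise (fun z v => Disjoint (terr z) (terr v)) ∧
        l.prod = w := by
  rintro l rfl
  exact ⟨fun _ => isWreathCycle_of_mem_cycleDecomposition,
    pairwise_disjoint_cycleDecomposition w, prod_cycleDecomposition w⟩

open scoped Classical in
/-- every element of `K ≀_Γ H` is a product of pairwise disjoint
wreath cycles, given explicitly by the cycle factors of the top component and
the fixed points inside the territory. -/
theorem wreathCycle_decomposition {K Γ : Type*} [Group K] [Fintype Γ] [DecidableEq Γ]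
    (H : Subgroup (Equiv.Perm Γ)) (w : Wr K Γ) (hw : w.top ∈ H) :
    ∀ l : List (Wr K Γ),
      l = (w.top.cycleFactorsFinset.toList.map fun c =>
            Wr.mk (fun γ => if c γ ≠ γ then w.base γ else 1) c)
          ++ ((Finset.univ.filter fun γ => w.top γ = γ ∧ w.base γ ≠ 1).toList.map fun γ₀ =>
            Wr.mk (fun γ => if γ = γ₀ then w.base γ else 1) 1) →
      (∀ z ∈ l, IsWreathCycle z) ∧
        l.Pairwise (fun z v => Disjoint (terr z) (terr v)) ∧
        l.prod = w :=
  wreathCycle_decomposition_general w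
end

section
/- The decomposition of an element of K ≀_Γ H into a product of pairwise disjoint wreath cycles in K ≀_Γ Sym(Γ) is unique up to reordering of the factors. -/
set_option linter.unusedSectionVars false

/-!
A product of elements with pairwise disjoint territories agrees, on the territory of each
factor, with that factor (base and top), and is trivial outside all territories. The
territory of a wreath cycle `z` is the cycle of `z.top` through any of its points, hence
also the cycle through that point of the top of any element agreeing with `z` there. So if
two disjoint decompositions have the same product `w`, a point `γ` in the territory of a
factor `z` of the first lies in the territory of a factor `v` of the second, both
territories equal the `w.top`-cycle of `γ`, and `z = v` because both agree with `w` on it.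
-/

namespace Equiv.Perm

variable {α : Type*} {p q : Perm α} {s : Set α}

theorem eqOn_inv_of_eqOn (hs : Set.MapsTo ⇑p⁻¹ s s) (h : Set.EqOn q p s) :
    Set.EqOn ⇑q⁻¹ ⇑p⁻¹ s := fun x hx => by
  rw [inv_eq_iff_eq, h (hs hx)]
  exact (p.apply_symm_apply x).symm

theorem eqOn_pow_of_eqOn (hs : Set.MapsTo p s s) (h : Set.EqOn q p s) (n : ℕ) :
    Set.EqOn ⇑(q ^ n) ⇑(p ^ n) s := by
  induction n with
  | zero => exact fun _ _ => rfl
  | succ n ih =>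
    intro x hx
    have hpx : (p ^ n) x ∈ s := by rw [coe_pow]; exact hs.iterate n hx
    rw [pow_succ', pow_succ', mul_apply, mul_apply, ih hx, h hpx]

theorem eqOn_zpow_of_eqOn (hs : Set.MapsTo p s s) (hs' : Set.MapsTo ⇑p⁻¹ s s)
    (h : Set.EqOn q p s) : ∀ i : ℤ, Set.EqOn ⇑(q ^ i) ⇑(p ^ i) s
  | (n : ℕ) => by simpa only [zpow_natCast] using eqOn_pow_of_eqOn hs h n
  | .negSucc n => by
    rw [zpow_negSucc, zpow_negSucc, ← inv_pow, ← inv_pow]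
    exact eqOn_pow_of_eqOn hs' (eqOn_inv_of_eqOn hs' h) (n + 1)

theorem sameCycle_iff_of_eqOn (hs : Set.MapsTo p s s) (hs' : Set.MapsTo ⇑p⁻¹ s s)
    (h : Set.EqOn q p s) {x y : α} (hx : x ∈ s) : q.SameCycle x y ↔ p.SameCycle x y := by
  simp only [SameCycle, eqOn_zpow_of_eqOn hs hs' h _ hx]

end Equiv.Perm

namespace Wr

variable {K Γ : Type*} [Group K] {a b v w z : Wr K Γ} {s : Set Γ} {γ : Γ}

theorem mul_base_s3 (a b : Wr K Γ) (γ : Γ) : (a * b).base γ = a.base γ * b.base (a.top γ) := rfl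

theorem mul_top_apply_s3 (a b : Wr K Γ) (γ : Γ) : (a * b).top γ = b.top (a.top γ) := rfl

theorem mem_terr : γ ∈ terr w ↔ w.top γ ≠ γ ∨ w.base γ ≠ 1 := Iff.rfl

theorem notMem_terr : γ ∉ terr w ↔ w.top γ = γ ∧ w.base γ = 1 := by
  simp only [mem_terr, not_or, not_not]

theorem terr_one : terr (1 : Wr K Γ) = ∅ :=
  Set.eq_empty_of_forall_notMem fun _ => notMem_terr.2 ⟨rfl, rfl⟩

theorem top_apply_mem_terr_iff : w.top γ ∈ terr w ↔ γ ∈ terr w := by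
  by_cases hγ : w.top γ = γ
  · rw [hγ]
  · exact iff_of_true (Or.inl fun h => hγ (w.top.injective h)) (Or.inl hγ)

theorem mapsTo_top_terr (w : Wr K Γ) : Set.MapsTo w.top (terr w) (terr w) :=
  fun _ => top_apply_mem_terr_iff.2

theorem mapsTo_top_inv_terr (w : Wr K Γ) : Set.MapsTo ⇑w.top⁻¹ (terr w) (terr w) :=
  fun γ hγ => top_apply_mem_terr_iff.1 (by simpa using hγ)

theorem terr_mul_subset (a b : Wr K Γ) : terr (a * b) ⊆ terr a ∪ terr b := by
  intro γ hγ
  by_contra h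
  obtain ⟨⟨ha₁, ha₂⟩, hb₁, hb₂⟩ := And.imp notMem_terr.1 notMem_terr.1 (not_or.1 h)
  exact notMem_terr.2
    ⟨by rw [mul_top_apply_s3, ha₁, hb₁], by rw [mul_base_s3, ha₁, ha₂, hb₂, one_mul]⟩ hγ

theorem terr_list_prod_subset : ∀ l : List (Wr K Γ), terr l.prod ⊆ ⋃ z ∈ l, terr z
  | [] => by simp [terr_one]
  | a :: l => by
    simpa using (terr_mul_subset a l.prod).trans (Set.union_subset_union_right _
      (terr_list_prod_subset l))

def AgreeOn (w z : Wr K Γ) (s : Set Γ) : Prop :=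
  Set.EqOn w.base z.base s ∧ Set.EqOn w.top z.top s

theorem AgreeOn.trans (h : AgreeOn w v s) (h' : AgreeOn v z s) : AgreeOn w z s :=
  ⟨h.1.trans h'.1, h.2.trans h'.2⟩

theorem AgreeOn.mem_terr_iff (h : AgreeOn w z s) (hγ : γ ∈ s) :
    γ ∈ terr w ↔ γ ∈ terr z := by
  rw [mem_terr, mem_terr, h.1 hγ, h.2 hγ]

theorem agreeOn_mul_left (h : Disjoint (terr a) (terr b)) : AgreeOn (a * b) a (terr a) := by
  refine ⟨fun γ hγ => ?_, fun γ hγ => ?_⟩ <;>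
    obtain ⟨hb₁, hb₂⟩ := notMem_terr.1 (h.notMem_of_mem_left (top_apply_mem_terr_iff.2 hγ))
  · rw [mul_base_s3, hb₂, mul_one]
  · rw [mul_top_apply_s3, hb₁]

theorem agreeOn_mul_right (h : Disjoint (terr a) s) : AgreeOn (a * b) b s := by
  refine ⟨fun γ hγ => ?_, fun γ hγ => ?_⟩ <;>
    obtain ⟨ha₁, ha₂⟩ := notMem_terr.1 (h.notMem_of_mem_right hγ)
  · rw [mul_base_s3, ha₁, ha₂, one_mul]
  · rw [mul_top_apply_s3, ha₁]

theorem agreeOn_list_prod {l : List (Wr K Γ)}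
    (hd : l.Pairwise fun z v => Disjoint (terr z) (terr v)) (hz : z ∈ l) :
    AgreeOn l.prod z (terr z) := by
  induction l with
  | nil => simp at hz
  | cons a t ih =>
    rw [List.pairwise_cons] at hd
    rw [List.prod_cons]
    rcases List.mem_cons.1 hz with rfl | hz
    · exact agreeOn_mul_left
        ((Set.disjoint_iUnion₂_right.2 hd.1).mono_right (terr_list_prod_subset t))
    · exact (agreeOn_mul_right (hd.1 z hz)).trans (ih hd.2 hz)

theorem eq_of_agreeOn (hz : AgreeOn w z (terr z)) (hv : AgreeOn w v (terr v))
    (h : terr z = terr v) : z = v := by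
  refine ext' (funext fun γ => ?_) (Equiv.ext fun γ => ?_) <;> by_cases hγ : γ ∈ terr z
  · exact (hz.1 hγ).symm.trans (hv.1 (h ▸ hγ))
  · rw [(notMem_terr.1 hγ).2, (notMem_terr.1 (h ▸ hγ)).2]
  · exact (hz.2 hγ).symm.trans (hv.2 (h ▸ hγ))
  · rw [(notMem_terr.1 hγ).1, (notMem_terr.1 (h ▸ hγ)).1]

namespace IsWreathCycle

theorem terr_nonempty (hz : IsWreathCycle z) : (terr z).Nonempty := by
  rcases hz with ⟨-, γ₀, hterr⟩ | ⟨⟨γ, hγ, -⟩, hterr⟩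
  · exact ⟨γ₀, hterr ▸ rfl⟩
  · exact ⟨γ, hterr ▸ hγ⟩

theorem terr_eq_setOf_sameCycle (hz : IsWreathCycle z) (hγ : γ ∈ terr z) :
    terr z = {δ | z.top.SameCycle γ δ} := by
  rcases hz with ⟨htop, γ₀, hterr⟩ | ⟨hcyc, hterr⟩
  · rw [hterr] at hγ ⊢
    rw [htop, hγ]
    ext δ
    exact (Equiv.Perm.sameCycle_one.trans eq_comm).symm
  · rw [hterr] at hγ ⊢
    ext δ
    exact ⟨hcyc.sameCycle hγ, fun h hδ => hγ (h.apply_eq_self_iff.2 hδ)⟩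

theorem terr_eq_setOf_sameCycle_of_agreeOn (hz : IsWreathCycle z) (hw : AgreeOn w z (terr z))
    (hγ : γ ∈ terr z) : terr z = {δ | w.top.SameCycle γ δ} := by
  rw [hz.terr_eq_setOf_sameCycle hγ]
  ext δ
  exact (Equiv.Perm.sameCycle_iff_of_eqOn (mapsTo_top_terr z) (mapsTo_top_inv_terr z)
    hw.2 hγ).symm

theorem mem_of_agreeOn_list_prod (hz : IsWreathCycle z) {l : List (Wr K Γ)}
    (hc : ∀ v ∈ l, IsWreathCycle v) (hd : l.Pairwise fun z v => Disjoint (terr z) (terr v))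
    (hw : AgreeOn l.prod z (terr z)) : z ∈ l := by
  obtain ⟨γ, hγ⟩ := hz.terr_nonempty
  obtain ⟨v, hv, hγv⟩ : ∃ v ∈ l, γ ∈ terr v := by
    simpa using terr_list_prod_subset l ((hw.mem_terr_iff hγ).2 hγ)
  have hwv := agreeOn_list_prod hd hv
  have hterr : terr z = terr v := by
    rw [hz.terr_eq_setOf_sameCycle_of_agreeOn hw hγ,
      (hc v hv).terr_eq_setOf_sameCycle_of_agreeOn hwv hγv]
  exact eq_of_agreeOn hw hwv hterr ▸ hv

end IsWreathCycle

theorem nodup_of_pairwise_disjoint_terr {l : List (Wr K Γ)} (hc : ∀ z ∈ l, IsWreathCycle z)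
    (hd : l.Pairwise fun z v => Disjoint (terr z) (terr v)) : l.Nodup :=
  hd.imp_of_mem fun ha _ hab heq =>
    (hc _ ha).terr_nonempty.ne_empty (disjoint_self.1 (by rwa [← heq] at hab))

end Wr

open Wr

theorem wreathCycle_decomposition_unique_general {K Γ : Type*} [Group K]
    (l₁ l₂ : List (Wr K Γ))
    (hc₁ : ∀ z ∈ l₁, IsWreathCycle z)
    (hd₁ : l₁.Pairwise fun z v => Disjoint (terr z) (terr v))
    (hc₂ : ∀ z ∈ l₂, IsWreathCycle z)
    (hd₂ : l₂.Pairwise fun z v => Disjoint (terr z) (terr v))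
    (hprod : l₁.prod = l₂.prod) :
    l₁.Perm l₂ := by
  rw [List.perm_ext_iff_of_nodup (nodup_of_pairwise_disjoint_terr hc₁ hd₁)
    (nodup_of_pairwise_disjoint_terr hc₂ hd₂)]
  intro z
  constructor
  · intro hz
    exact (hc₁ z hz).mem_of_agreeOn_list_prod hc₂ hd₂ (hprod ▸ agreeOn_list_prod hd₁ hz)
  · intro hz
    exact (hc₂ z hz).mem_of_agreeOn_list_prod hc₁ hd₁ (hprod ▸ agreeOn_list_prod hd₂ hz)

/-- the decomposition into pairwise disjoint wreath cycles is
unique up to reordering of the factors. -/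
theorem wreathCycle_decomposition_unique {K Γ : Type*} [Group K] [Fintype Γ]
    (l₁ l₂ : List (Wr K Γ))
    (hc₁ : ∀ z ∈ l₁, IsWreathCycle z)
    (hd₁ : l₁.Pairwise fun z v => Disjoint (terr z) (terr v))
    (hc₂ : ∀ z ∈ l₂, IsWreathCycle z)
    (hd₂ : l₂.Pairwise fun z v => Disjoint (terr z) (terr v))
    (hprod : l₁.prod = l₂.prod) :
    l₁.Perm l₂ :=
  wreathCycle_decomposition_unique_general l₁ l₂ hc₁ hd₁ hc₂ hd₂ hprod
end

section
/- Let w = (f,h) ∈ K ≀_Γ H be a wreath cycle and α, β ∈ terr(w). Then the yades [α,w]Yade and [β,w]Yade are conjugate in K. Moreover, if j satisfies α^{h^j} = β, then ([α,w]Yade)^y = [β,w]Yade for y = ∏_{i=0}^{j-1} [α^{h^i}]f. -/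
set_option linter.unusedSectionVars false

open Wr

lemma yade_step {K Γ : Type*} [Group K] [Fintype Γ] (w : Wr K Γ) (γ : Γ) :
    yade w (w.top γ) = (w.base γ)⁻¹ * yade w γ * w.base γ := by
  obtain ⟨m, hm⟩ : ∃ m, orderOf w.top = m + 1 :=
    ⟨_, (Nat.succ_pred_eq_of_pos (orderOf_pos _)).symm⟩
  have key : ∀ i : ℕ, w.base ((w.top ^ i) (w.top γ)) = w.base ((w.top ^ (i + 1)) γ) := by
    intro i; rw [pow_succ, Equiv.Perm.mul_apply]
  have hL : yade w (w.top γ) =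
      ((List.range m).map fun i => w.base ((w.top ^ (i + 1)) γ)).prod * w.base γ := by
    unfold yade
    rw [hm, List.range_succ, List.map_append, List.prod_append]
    simp only [key, List.map_cons, List.map_nil, List.prod_cons, List.prod_nil, mul_one]
    have h2 : (w.top ^ (m + 1)) γ = γ := by
      rw [← hm, pow_orderOf_eq_one, Equiv.Perm.one_apply]
    rw [h2]
  have hR : yade w γ =
      w.base γ * ((List.range m).map fun i => w.base ((w.top ^ (i + 1)) γ)).prod := by
    unfold yade
    rw [hm, List.range_succ_eq_map, List.map_cons, List.prod_cons, List.map_map]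
    congr 1
  rw [hL, hR]
  group

lemma yade_pow {K Γ : Type*} [Group K] [Fintype Γ] (w : Wr K Γ) (α : Γ) (j : ℕ) :
    yade w ((w.top ^ j) α) =
      (((List.range j).map fun i => w.base ((w.top ^ i) α)).prod)⁻¹ * yade w α *
        ((List.range j).map fun i => w.base ((w.top ^ i) α)).prod := by
  induction j with
  | zero => simp
  | succ n ih =>
      have h1 : (w.top ^ (n + 1)) α = w.top ((w.top ^ n) α) := by
        rw [pow_succ', Equiv.Perm.mul_apply]
      rw [h1, yade_step, ih, List.range_succ, List.map_append, List.prod_append]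
      simp only [List.map_cons, List.map_nil, List.prod_cons, List.prod_nil, mul_one,
        mul_inv_rev]
      group

/-- for a wreath cycle, yades at any two points of the territory are
conjugate; explicitly, if `α^{h^j} = β` then `([α,w]Yade)^y = [β,w]Yade`
with `y = ∏_{i=0}^{j-1} [α^{h^i}]f`. -/
theorem yade_conjugate {K Γ : Type*} [Group K] [Fintype Γ]
    (H : Subgroup (Equiv.Perm Γ)) (w : Wr K Γ) (hwH : w.top ∈ H)
    (hw : IsWreathCycle w) (α β : Γ) (hα : α ∈ terr w) (hβ : β ∈ terr w) :
    IsConj (yade w α) (yade w β) ∧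
      ∀ j : ℕ, (w.top ^ j) α = β →
        (((List.range j).map fun i => w.base ((w.top ^ i) α)).prod)⁻¹ * yade w α *
          ((List.range j).map fun i => w.base ((w.top ^ i) α)).prod = yade w β := by
  have part2 : ∀ j : ℕ, (w.top ^ j) α = β →
      (((List.range j).map fun i => w.base ((w.top ^ i) α)).prod)⁻¹ * yade w α *
        ((List.range j).map fun i => w.base ((w.top ^ i) α)).prod = yade w β := by
    intro j hj
    rw [← hj, yade_pow]
  refine ⟨?_, part2⟩
  have hj : ∃ j : ℕ, (w.top ^ j) α = β := by
    rcases hw with ⟨htop, γ₀, hterr⟩ | ⟨hcyc, hterr⟩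
    · rw [hterr, Set.mem_singleton_iff] at hα hβ
      exact ⟨0, by simp [hα, hβ]⟩
    · rw [hterr] at hα hβ
      exact hcyc.exists_pow_eq hα hβ
  obtain ⟨j, hj⟩ := hj
  set y := ((List.range j).map fun i => w.base ((w.top ^ i) α)).prod
  rw [isConj_iff]
  exact ⟨y⁻¹, by rw [inv_inv]; exact part2 j hj⟩
end

section
/- Two wreath cycles w, v ∈ S = K ≀_Γ Sym(Γ) are conjugate in S if and only if they have the same load, i.e., their top components have the same order and their yades lie in the same K-conjugacy class. -/
set_option linter.unusedSectionVars false

open Wr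

/-!
If `c * w = v * c`, then `c.top` carries `terr v` into `terr w` and the yade telescopes:
`c.base β * yade w (c.top β) = yade v β * c.base β`. Taking `c = w` shows that the yades of a
wreath cycle along its territory are conjugate, which gives the forward direction.

Conversely, fix `α ∈ terr w` and let the base coordinate at `γ` be the partial yade of `w` running
from `γ` until it first reaches `α`. This base element conjugates `w` to the normal form
`(Pi.mulSingle α (yade w α), w.top)`. Two normal forms are conjugate once their tops are conjugate
by some `σ` (cycles of equal length, or both trivial) and their yades are conjugate in `K`: first
conjugate by `(1, σ)`, then by a constant base element.
-/

open Function

namespace Equiv.Perm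

variable {Γ : Type*} (h : Perm Γ) {α γ : Γ}

open Classical in
noncomputable def stepsTo (α γ : Γ) : ℕ :=
  if hγ : ∃ n, (h ^ n) γ = α then Nat.find hγ else 0

theorem pow_succ_apply (n : ℕ) (γ : Γ) : (h ^ (n + 1)) γ = (h ^ n) (h γ) :=
  iterate_succ_apply h n γ

theorem stepsTo_self : h.stepsTo α α = 0 := by
  classical
  rw [stepsTo, dif_pos ⟨0, rfl⟩, Nat.find_eq_zero]
  rfl

theorem stepsTo_le {n : ℕ} (hn : (h ^ n) γ = α) : h.stepsTo α γ ≤ n := by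
  classical
  rw [stepsTo, dif_pos ⟨n, hn⟩]
  exact Nat.find_min' _ hn

theorem pow_stepsTo_apply (hγ : ∃ n, (h ^ n) γ = α) : (h ^ h.stepsTo α γ) γ = α := by
  classical
  rw [stepsTo, dif_pos hγ]
  exact Nat.find_spec hγ

theorem stepsTo_eq_zero (hγ : ¬∃ n, (h ^ n) γ = α) : h.stepsTo α γ = 0 := by
  classical
  rw [stepsTo, dif_neg hγ]

theorem stepsTo_eq_stepsTo_apply_add_one (hγα : γ ≠ α) (hγ : ∃ n, (h ^ n) γ = α) :
    h.stepsTo α γ = h.stepsTo α (h γ) + 1 := by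
  classical
  have hγ' : ∃ n, (h ^ n) (h γ) = α := by
    obtain ⟨n, hn⟩ := hγ
    cases n with
    | zero => exact absurd hn hγα
    | succ n => exact ⟨n, by rwa [← pow_succ_apply]⟩
  rw [stepsTo, stepsTo, dif_pos hγ, dif_pos hγ']
  exact Nat.find_comp_succ _ _ hγα

theorem stepsTo_apply_add_one (hα : 0 < minimalPeriod h α) :
    h.stepsTo α (h α) + 1 = minimalPeriod h α := by
  have hper : (h ^ minimalPeriod h α) α = α := by rw [coe_pow]; exact iterate_minimalPeriod
  obtain ⟨m, hm⟩ := Nat.exists_eq_add_of_lt hα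
  rw [zero_add] at hm
  rw [hm, pow_succ_apply] at hper
  refine le_antisymm (by rw [hm]; exact Nat.succ_le_succ (h.stepsTo_le hper)) ?_
  refine IsPeriodicPt.minimalPeriod_le (Nat.succ_pos _) ?_
  show (h ^ (h.stepsTo α (h α) + 1)) α = α
  rw [pow_succ_apply]
  exact h.pow_stepsTo_apply ⟨m, hper⟩

theorem IsCycle.minimalPeriod_eq_orderOf [Finite Γ] {f : Perm Γ} (hf : f.IsCycle) {x : Γ}
    (hx : f x ≠ x) : minimalPeriod f x = orderOf f := by
  refine Nat.dvd_antisymm (isPeriodicPt_iff_minimalPeriod_dvd.1 ?_)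
    (orderOf_dvd_of_pow_eq_one ((hf.pow_eq_one_iff' hx).2 ?_))
  · show (f ^ orderOf f) x = x
    rw [pow_orderOf_eq_one, one_apply]
  · rw [coe_pow]
    exact iterate_minimalPeriod

end Equiv.Perm

theorem isConj_iff_exists_semiconjBy {G : Type*} [Group G] {a b : G} :
    IsConj a b ↔ ∃ c, SemiconjBy c a b :=
  ⟨fun ⟨c, hc⟩ => ⟨c, hc⟩, fun ⟨c, hc⟩ => ⟨toUnits c, hc⟩⟩

namespace Wr

variable {K Γ : Type*} [Group K]

/-- `top` is an anti-homomorphism, hence the reversed roles of `x` and `y` on tops. -/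
theorem semiconjBy_iff {c x y : Wr K Γ} :
    SemiconjBy c x y ↔ SemiconjBy c.top y.top x.top ∧
      ∀ γ, c.base γ * x.base (c.top γ) = y.base γ * c.base (y.top γ) :=
  ⟨fun h => ⟨(congrArg top h).symm, fun γ => congrFun (congrArg base h) γ⟩,
    fun ⟨ht, hb⟩ => ext' (funext hb) ht.symm⟩

theorem orderOf_top_eq_of_semiconjBy {c w v : Wr K Γ} (hc : SemiconjBy c w v) :
    orderOf w.top = orderOf v.top :=
  ((semiconjBy_iff.1 hc).1.orderOf_eq).symm

theorem mem_terr_of_semiconjBy {c w v : Wr K Γ} (hc : SemiconjBy c w v) {β : Γ}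
    (hβ : β ∈ terr v) : c.top β ∈ terr w := by
  obtain ⟨ht, hb⟩ := semiconjBy_iff.1 hc
  contrapose! hβ
  simp only [terr, psupp, Set.mem_union, Set.mem_ofPred_eq, not_or, not_not] at hβ ⊢
  have hfix : v.top β = β := c.top.injective ((DFunLike.congr_fun ht β).trans hβ.1)
  have hbase := hb β
  rw [hβ.2, hfix, mul_one] at hbase
  exact ⟨hfix, by simpa using hbase⟩

noncomputable def partialYade (w : Wr K Γ) (γ : Γ) (n : ℕ) : K :=
  ((List.range n).map fun i => w.base ((w.top ^ i) γ)).prod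

theorem yade_eq_partialYade (w : Wr K Γ) (γ : Γ) :
    yade w γ = partialYade w γ (orderOf w.top) := rfl

@[simp]
theorem partialYade_zero (w : Wr K Γ) (γ : Γ) : partialYade w γ 0 = 1 := rfl

theorem partialYade_succ (w : Wr K Γ) (γ : Γ) (n : ℕ) :
    partialYade w γ (n + 1) = partialYade w γ n * w.base ((w.top ^ n) γ) :=
  List.prod_range_succ _ _

theorem partialYade_succ' (w : Wr K Γ) (γ : Γ) (n : ℕ) :
    partialYade w γ (n + 1) = w.base γ * partialYade w (w.top γ) n := by
  simp only [partialYade, List.prod_range_succ', pow_zero, Equiv.Perm.one_apply,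
    Equiv.Perm.pow_succ_apply]

theorem base_mul_partialYade_of_semiconjBy {c w v : Wr K Γ} (hc : SemiconjBy c w v) (β : Γ)
    (n : ℕ) :
    c.base β * partialYade w (c.top β) n = partialYade v β n * c.base ((v.top ^ n) β) := by
  obtain ⟨ht, hb⟩ := semiconjBy_iff.1 hc
  induction n with
  | zero => simp
  | succ n ih =>
    have htop : c.top ((v.top ^ n) β) = (w.top ^ n) (c.top β) :=
      DFunLike.congr_fun (ht.pow_right n) β
    rw [partialYade_succ, partialYade_succ, ← mul_assoc, ih, mul_assoc, mul_assoc, ← htop,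
      hb, pow_succ', Equiv.Perm.mul_apply]

theorem isConj_yade_of_semiconjBy {c w v : Wr K Γ} (hc : SemiconjBy c w v) (β : Γ) :
    IsConj (yade w (c.top β)) (yade v β) := by
  have h := base_mul_partialYade_of_semiconjBy hc β (orderOf v.top)
  rw [pow_orderOf_eq_one, Equiv.Perm.one_apply] at h
  rw [yade_eq_partialYade, yade_eq_partialYade, orderOf_top_eq_of_semiconjBy hc]
  exact isConj_iff_exists_semiconjBy.2 ⟨c.base β, h⟩

theorem isConj_yade_pow_apply (w : Wr K Γ) (γ : Γ) (n : ℕ) :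
    IsConj (yade w ((w.top ^ n) γ)) (yade w γ) := by
  induction n with
  | zero => exact IsConj.refl _
  | succ n ih =>
    rw [pow_succ', Equiv.Perm.mul_apply]
    exact (isConj_yade_of_semiconjBy (Commute.refl w) _).trans ih

theorem isConj_mk_comp (f : Γ → K) (h σ : Equiv.Perm Γ) :
    IsConj (⟨f, h⟩ : Wr K Γ) ⟨f ∘ σ, σ⁻¹ * h * σ⟩ :=
  isConj_iff_exists_semiconjBy.2 ⟨⟨1, σ⟩, semiconjBy_iff.2
    ⟨by simp [SemiconjBy, ← mul_assoc], fun γ => by simp⟩⟩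

theorem isConj_mk_mulSingle_apply [DecidableEq Γ] (h σ : Equiv.Perm Γ) (β : Γ) (k : K) :
    IsConj (⟨Pi.mulSingle (σ β) k, h⟩ : Wr K Γ) ⟨Pi.mulSingle β k, σ⁻¹ * h * σ⟩ := by
  simpa [Pi.mulSingle_comp_equiv] using isConj_mk_comp (Pi.mulSingle (σ β) k) h σ

theorem isConj_mk_mulSingle [DecidableEq Γ] (h : Equiv.Perm Γ) (α : Γ) {k k' : K}
    (hk : IsConj k k') : IsConj (⟨Pi.mulSingle α k, h⟩ : Wr K Γ) ⟨Pi.mulSingle α k', h⟩ := by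
  obtain ⟨u, hu⟩ := isConj_iff_exists_semiconjBy.1 hk
  refine isConj_iff_exists_semiconjBy.2
    ⟨⟨fun _ => u, 1⟩, semiconjBy_iff.2 ⟨SemiconjBy.one_left _, ?_⟩⟩
  intro γ
  rcases eq_or_ne γ α with rfl | hγ
  · simpa using hu.eq
  · simp [hγ]

theorem isConj_mk_mulSingle_partialYade [DecidableEq Γ] (w : Wr K Γ) {α : Γ}
    (hα : 0 < minimalPeriod w.top α)
    (hsupp : ∀ γ, w.base γ ≠ 1 → ∃ n, (w.top ^ n) γ = α) :
    IsConj (⟨Pi.mulSingle α (partialYade w α (minimalPeriod w.top α)), w.top⟩ : Wr K Γ) w := by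
  refine isConj_iff_exists_semiconjBy.2 ⟨⟨fun γ => partialYade w γ (w.top.stepsTo α γ), 1⟩,
    semiconjBy_iff.2 ⟨SemiconjBy.one_left _, ?_⟩⟩
  intro γ
  simp only [Equiv.Perm.one_apply]
  rcases eq_or_ne γ α with rfl | hγα
  · rw [Equiv.Perm.stepsTo_self, ← w.top.stepsTo_apply_add_one hα, partialYade_succ']
    simp
  by_cases hγ : ∃ n, (w.top ^ n) γ = α
  · rw [w.top.stepsTo_eq_stepsTo_apply_add_one hγα hγ, partialYade_succ']
    simp [hγα]
  · have hγ' : ¬∃ n, (w.top ^ n) (w.top γ) = α := fun ⟨n, hn⟩ =>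
      hγ ⟨n + 1, by rwa [Equiv.Perm.pow_succ_apply]⟩
    have hbase : w.base γ = 1 := by_contra fun hne => hγ (hsupp γ hne)
    rw [w.top.stepsTo_eq_zero hγ, w.top.stepsTo_eq_zero hγ']
    simp [hγα, hbase]

end Wr

namespace Wr.IsWreathCycle

variable {K Γ : Type*} [Group K] {w v : Wr K Γ} {α γ : Γ}

theorem exists_pow_apply_eq [Finite Γ] (hw : IsWreathCycle w) (hα : α ∈ terr w)
    (hγ : γ ∈ terr w) : ∃ n, (w.top ^ n) γ = α := by
  rcases hw with ⟨-, γ₀, ht⟩ | ⟨hc, ht⟩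
  · rw [ht, Set.mem_singleton_iff] at hα hγ
    exact ⟨0, by rw [hα, hγ, pow_zero, Equiv.Perm.one_apply]⟩
  · rw [ht] at hα hγ
    exact hc.exists_pow_eq hγ hα

theorem minimalPeriod_eq_orderOf [Finite Γ] (hw : IsWreathCycle w) (hα : α ∈ terr w) :
    minimalPeriod w.top α = orderOf w.top := by
  rcases hw with ⟨h1, -⟩ | ⟨hc, ht⟩
  · rw [h1, Equiv.Perm.coe_one, minimalPeriod_id, orderOf_one]
  · rw [ht] at hα
    exact hc.minimalPeriod_eq_orderOf hα

theorem isConj_yade [Finite Γ] (hw : IsWreathCycle w) (hα : α ∈ terr w) (hγ : γ ∈ terr w) :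
    IsConj (yade w α) (yade w γ) := by
  obtain ⟨n, rfl⟩ := hw.exists_pow_apply_eq hα hγ
  exact isConj_yade_pow_apply w γ n

theorem isConj_mk_mulSingle_yade [Finite Γ] [DecidableEq Γ] (hw : IsWreathCycle w)
    (hα : α ∈ terr w) : IsConj (⟨Pi.mulSingle α (yade w α), w.top⟩ : Wr K Γ) w := by
  have hper := hw.minimalPeriod_eq_orderOf hα
  rw [yade_eq_partialYade, ← hper]
  exact isConj_mk_mulSingle_partialYade w (hper ▸ orderOf_pos w.top)
    fun γ hγ => hw.exists_pow_apply_eq hα (Or.inr hγ)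

theorem exists_top_eq_conj [Fintype Γ] (hw : IsWreathCycle w) (hv : IsWreathCycle v)
    (hord : orderOf w.top = orderOf v.top) :
    ∃ σ : Equiv.Perm Γ, ∃ β ∈ terr v, σ β ∈ terr w ∧ v.top = σ⁻¹ * w.top * σ := by
  classical
  rcases hw with ⟨hw1, γ₀, htw⟩ | ⟨hcw, htw⟩ <;> rcases hv with ⟨hv1, δ₀, htv⟩ | ⟨hcv, htv⟩
  · exact ⟨Equiv.swap γ₀ δ₀, δ₀, by simp [htv], by simp [htw], by simp [hw1, hv1]⟩
  · rw [hw1, orderOf_one, eq_comm, orderOf_eq_one_iff] at hord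
    exact absurd hord hcv.ne_one
  · rw [hv1, orderOf_one, orderOf_eq_one_iff] at hord
    exact absurd hord hcw.ne_one
  · obtain ⟨σ, hσ⟩ := isConj_iff.1
      (hcv.isConj hcw (by rw [← hcv.orderOf, ← hcw.orderOf, hord]))
    obtain ⟨β, hβ, -⟩ := hcv
    refine ⟨σ, β, by rwa [htv], ?_, by rw [← hσ]; group⟩
    rw [htw, ← hσ]
    simpa [psupp] using hβ

end Wr.IsWreathCycle

/-- two wreath cycles are conjugate in `S = K ≀_Γ Sym(Γ)` iff they
have the same load, i.e. equal top component orders and conjugate yades. -/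
theorem wreathCycle_isConj_iff_load {K Γ : Type*} [Group K] [Fintype Γ]
    (w v : Wr K Γ) (hw : IsWreathCycle w) (hv : IsWreathCycle v) :
    IsConj w v ↔
      (orderOf w.top = orderOf v.top ∧
        ∀ α ∈ terr w, ∀ β ∈ terr v, IsConj (yade w α) (yade v β)) := by
  classical
  constructor
  · intro hwv
    obtain ⟨c, hc⟩ := isConj_iff_exists_semiconjBy.1 hwv
    exact ⟨orderOf_top_eq_of_semiconjBy hc, fun α hα β hβ =>
      (hw.isConj_yade hα (mem_terr_of_semiconjBy hc hβ)).trans (isConj_yade_of_semiconjBy hc β)⟩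
  · rintro ⟨hord, hyade⟩
    obtain ⟨σ, β, hβ, hσβ, htop⟩ := hw.exists_top_eq_conj hv hord
    have hmove := isConj_mk_mulSingle_apply (K := K) w.top σ β (yade w (σ β))
    rw [← htop] at hmove
    exact (hw.isConj_mk_mulSingle_yade hσβ).symm.trans <| hmove.trans <|
      (isConj_mk_mulSingle v.top β (hyade _ hσβ _ hβ)).trans (hv.isConj_mk_mulSingle_yade hβ)
end

section
/- Two elements w = (f,h) and v = (e,g) of S = K ≀_Γ Sym(Γ) are conjugate in W = K ≀_Γ H if and only if there exists t ∈ H with h^t = g and P(w)^t = P(v). -/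
set_option linter.unusedSectionVars false

open Wr

namespace Wr

variable {K Γ : Type*} [Group K] [Fintype Γ] [DecidableEq Γ]

/-- The load of a wreath cycle: the conjugacy class of its yades over the territory,
together with the order of the top component. -/
noncomputable def load (z : Wr K Γ) : Set K × ℕ :=
  ({x | ∃ γ ∈ terr z, IsConj (yade z γ) x}, orderOf z.top)

/-- The set of wreath cycles occurring in the disjoint wreath cycle decomposition of `w`. -/
def wCycles (w : Wr K Γ) : Set (Wr K Γ) :=
  {z | ∃ c ∈ w.top.cycleFactorsFinset,
        z = Wr.mk (fun γ => if c γ ≠ γ then w.base γ else 1) c} ∪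
  {z | ∃ γ₀, w.top γ₀ = γ₀ ∧ w.base γ₀ ≠ 1 ∧
        z = Wr.mk (fun γ => if γ = γ₀ then w.base γ else 1) 1}

/-- The territory decomposition `P(w)`: for each load `L`, the set of territories of
the wreath cycles of `w` of load `L`. -/
noncomputable def tdecomp (w : Wr K Γ) : Set K × ℕ → Set (Set Γ) :=
  fun L => {Ω | ∃ z ∈ wCycles w, load z = L ∧ Ω = terr z}

end Wr

/-!
Conjugating by `a = (b, t)` carries each wreath cycle `z` of `w` to a wreath cycle of `a⁻¹ * w * a`
with territory `t '' terr z` and the same load; this gives one direction.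

Conversely, conjugating `w` by the pure permutation `(1, t)` reduces to the case `h = g` and
`P(w) = P(v)`. Matching territories of equal load shows that on every `h`-orbit of length `n`
through `γ` the products `F(i) = f γ * f (h γ) * ⋯ * f (h^(i-1) γ)` and the analogous `E(i)`
satisfy `c * F(n) * c⁻¹ = E(n)` for some `c`. The base function `b (h^i γ) = F(i)⁻¹ * c⁻¹ * E(i)`
then conjugates `(f, h)` into `(e, h)`; it is well defined because this expression is `n`-periodic
in `i`.
-/

open Equiv Equiv.Perm Function

theorem Equiv.Perm.pow_apply_eq_pow_apply_iff_modEq_minimalPeriod {α : Type*} [Finite α]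
    (f : Perm α) {x : α} {i j : ℕ} :
    (f ^ i) x = (f ^ j) x ↔ i ≡ j [MOD minimalPeriod f x] := by
  have hpos : 0 < minimalPeriod f x :=
    minimalPeriod_pos_of_mem_periodicPts (f.injective.mem_periodicPts x)
  rw [← iterate_eq_pow, ← iterate_eq_pow, ← iterate_mod_minimalPeriod_eq (n := i),
    ← iterate_mod_minimalPeriod_eq (n := j)]
  exact iterate_eq_iterate_iff_of_lt_minimalPeriod (Nat.mod_lt _ hpos) (Nat.mod_lt _ hpos)

theorem Equiv.Perm.orderOf_cycleOf_eq_minimalPeriod {α : Type*} [Finite α] (f : Perm α)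
    [DecidableRel f.SameCycle] (x : α) : orderOf (f.cycleOf x) = minimalPeriod f x := by
  have key : ∀ k, orderOf (f.cycleOf x) ∣ k ↔ minimalPeriod f x ∣ k := fun k => by
    rw [orderOf_dvd_iff_pow_eq_one, ← isPeriodicPt_iff_minimalPeriod_dvd, IsPeriodicPt,
      IsFixedPt, iterate_eq_pow, ← cycleOf_pow_apply_self]
    by_cases hx : f x = x
    · simp [(cycleOf_eq_one_iff f).2 hx]
    · exact (isCycle_cycleOf f hx).pow_eq_one_iff' (by rwa [cycleOf_apply_self])
  exact Nat.dvd_antisymm ((key _).2 dvd_rfl) ((key _).1 dvd_rfl)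

section Conj

variable {K : Type*} [Group K]

theorem inv_mul_mul_eq_one_iff (g x : K) : g⁻¹ * x * g = 1 ↔ x = 1 := by
  simpa using conj_eq_one_iff (a := g⁻¹) (b := x)

theorem isConj_inv_mul_mul_left_iff (g y x : K) : IsConj (g⁻¹ * y * g) x ↔ IsConj y x :=
  ⟨(isConj_iff.2 ⟨g⁻¹, by group⟩).trans, (isConj_iff.2 ⟨g, by group⟩).trans⟩

end Conj

section OrbitProd

variable {K Γ : Type*}

def orbitProd [Monoid K] (h : Perm Γ) (f : Γ → K) (γ : Γ) (n : ℕ) : K :=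
  ((List.range n).map fun i => f ((h ^ i) γ)).prod

section Monoid

variable [Monoid K] {h : Perm Γ} {f : Γ → K} {γ : Γ}

@[simp] theorem orbitProd_zero : orbitProd h f γ 0 = 1 := rfl

theorem orbitProd_succ (n : ℕ) : orbitProd h f γ (n + 1) = orbitProd h f γ n * f ((h ^ n) γ) := by
  simp [orbitProd, List.range_succ]

@[simp] theorem orbitProd_one : orbitProd h f γ 1 = f γ := by
  simp [orbitProd_succ]

theorem orbitProd_add (m n : ℕ) :
    orbitProd h f γ (m + n) = orbitProd h f γ m * orbitProd h f ((h ^ m) γ) n := by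
  induction n with
  | zero => simp
  | succ n ih =>
    rw [← add_assoc, orbitProd_succ, ih, orbitProd_succ, mul_assoc, add_comm m n, pow_add,
      mul_apply]

theorem orbitProd_congr {h' : Perm Γ} {f' : Γ → K} {γ' : Γ} {n : ℕ}
    (hf : ∀ j < n, f ((h ^ j) γ) = f' ((h' ^ j) γ')) : orbitProd h f γ n = orbitProd h' f' γ' n :=
  congrArg List.prod (List.map_congr_left fun j hj => hf j (List.mem_range.1 hj))

end Monoid

variable [Group K] {h : Perm Γ} {f e : Γ → K} {γ : Γ}

theorem orbitProd_apply_of_pow_apply_eq {n : ℕ} (hn : (h ^ n) γ = γ) :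
    orbitProd h f (h γ) n = (f γ)⁻¹ * orbitProd h f γ n * f γ := by
  have h1 := orbitProd_add (h := h) (f := f) (γ := γ) 1 n
  rw [add_comm, orbitProd_succ, hn, orbitProd_one, pow_one] at h1
  rw [mul_assoc, h1, ← mul_assoc, inv_mul_cancel, one_mul]

theorem isConj_orbitProd_pow_apply {n : ℕ} (hn : (h ^ n) γ = γ) (i : ℕ) :
    IsConj (orbitProd h f γ n) (orbitProd h f ((h ^ i) γ) n) := by
  induction i with
  | zero => rfl
  | succ i ih =>
    have hni : (h ^ n) ((h ^ i) γ) = (h ^ i) γ := by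
      rw [← mul_apply, ← pow_add, add_comm, pow_add, mul_apply, hn]
    rw [pow_succ', mul_apply, orbitProd_apply_of_pow_apply_eq hni]
    exact ih.trans (isConj_iff.2 ⟨(f ((h ^ i) γ))⁻¹, by group⟩)

theorem periodic_orbitProd_inv_mul_orbitProd {n : ℕ} (hn : (h ^ n) γ = γ) {c : K}
    (hc : c * orbitProd h f γ n * c⁻¹ = orbitProd h e γ n) :
    Periodic (fun i => (orbitProd h f γ i)⁻¹ * c⁻¹ * orbitProd h e γ i) n := fun i => by
  simp only [add_comm i n, orbitProd_add n i, hn, ← hc]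
  group

theorem exists_conj_of_isConj_orbitProd [Finite Γ]
    (hfe : ∀ γ, IsConj (orbitProd h f γ (minimalPeriod h γ))
      (orbitProd h e γ (minimalPeriod h γ))) :
    ∃ b : Γ → K, ∀ γ, (b γ)⁻¹ * f γ * b (h γ) = e γ := by
  choose c hc using fun γ => isConj_iff.1 (hfe γ)
  let B (γ₀ : Γ) (i : ℕ) : K := (orbitProd h f γ₀ i)⁻¹ * (c γ₀)⁻¹ * orbitProd h e γ₀ i
  have hB (γ₀ : Γ) {i j : ℕ} (hij : (h ^ i) γ₀ = (h ^ j) γ₀) : B γ₀ i = B γ₀ j := by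
    have hper : Periodic (B γ₀) (minimalPeriod h γ₀) := periodic_orbitProd_inv_mul_orbitProd
      (by rw [← iterate_eq_pow]; exact iterate_minimalPeriod) (hc γ₀)
    rw [← hper.map_mod_nat i, ← hper.map_mod_nat j,
      (h.pow_apply_eq_pow_apply_iff_modEq_minimalPeriod.1 hij : i % _ = j % _)]
  obtain ⟨r, hr, hrh⟩ : ∃ r : Γ → Γ, (∀ γ, SameCycle h (r γ) γ) ∧ ∀ γ, r (h γ) = r γ :=
    ⟨fun γ => (Quotient.mk (SameCycle.setoid h) γ).out,
      fun γ => Quotient.mk_out (s := SameCycle.setoid h) γ,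
      fun _ => congrArg Quotient.out (Quotient.sound (sameCycle_apply_left.2 SameCycle.rfl))⟩
  choose idx hidx using fun γ => (hr γ).exists_nat_pow_eq
  refine ⟨fun γ => B (r γ) (idx γ), fun γ => ?_⟩
  have hnext : (h ^ idx (h γ)) (r γ) = (h ^ (idx γ + 1)) (r γ) := by
    rw [pow_succ', mul_apply, hidx γ, ← hrh]
    exact hidx (h γ)
  simp only [hrh, hB _ hnext, B, orbitProd_succ]
  rw [hidx γ]
  group

end OrbitProd

namespace Wr

variable {K Γ : Type*} [Group K]

theorem mul_top (x y : Wr K Γ) : (x * y).top = y.top * x.top := rfl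

theorem conj_top (a z : Wr K Γ) : (a⁻¹ * z * a).top = a.top * z.top * a.top⁻¹ := rfl

theorem conj_top_apply (a z : Wr K Γ) (γ : Γ) : (a⁻¹ * z * a).top (a.top γ) = a.top (z.top γ) := by
  rw [conj_top, mul_apply, mul_apply, coe_inv, symm_apply_apply]

theorem conj_base_apply (a z : Wr K Γ) (γ : Γ) :
    (a⁻¹ * z * a).base (a.top γ) = (a.base γ)⁻¹ * z.base γ * a.base (z.top γ) := by
  change (a.base (a.top⁻¹ (a.top γ)))⁻¹ * z.base (a.top⁻¹ (a.top γ)) *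
    a.base (z.top (a.top⁻¹ (a.top γ))) = _
  simp

theorem conj_eq_iff {a z z' : Wr K Γ} :
    a⁻¹ * z * a = z' ↔ a.top * z.top * a.top⁻¹ = z'.top ∧
      ∀ γ, (a.base γ)⁻¹ * z.base γ * a.base (z.top γ) = z'.base (a.top γ) := by
  constructor
  · rintro rfl
    exact ⟨rfl, fun γ => (conj_base_apply a z γ).symm⟩
  · rintro ⟨htop, hbase⟩
    refine ext' (funext fun γ => ?_) htop
    obtain ⟨δ, rfl⟩ := a.top.surjective γ
    rw [conj_base_apply, hbase]

theorem orderOf_conj_top (a z : Wr K Γ) : orderOf (a⁻¹ * z * a).top = orderOf z.top :=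
  (MulAut.conj a.top).orderOf_eq z.top

theorem apply_mem_terr_conj_iff (a z : Wr K Γ) {γ : Γ} :
    a.top γ ∈ terr (a⁻¹ * z * a) ↔ γ ∈ terr z := by
  simp only [terr, psupp, Set.mem_union, Set.mem_ofPred_eq, conj_top_apply, conj_base_apply,
    a.top.injective.ne_iff]
  by_cases hγ : z.top γ = γ <;> simp [hγ, inv_mul_mul_eq_one_iff]

theorem terr_conj (a z : Wr K Γ) : terr (a⁻¹ * z * a) = a.top '' terr z := by
  ext γ
  obtain ⟨δ, rfl⟩ := a.top.surjective γ
  rw [apply_mem_terr_conj_iff, a.top.injective.mem_set_image]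

theorem orbitProd_conj (a z : Wr K Γ) (γ : Γ) (n : ℕ) :
    orbitProd (a⁻¹ * z * a).top (a⁻¹ * z * a).base (a.top γ) n =
      (a.base γ)⁻¹ * orbitProd z.top z.base γ n * a.base ((z.top ^ n) γ) := by
  induction n with
  | zero => simp
  | succ n ih =>
    have hpow : ((a⁻¹ * z * a).top ^ n) (a.top γ) = a.top ((z.top ^ n) γ) := by
      rw [conj_top, conj_pow, mul_apply, mul_apply, coe_inv, symm_apply_apply]
    rw [orbitProd_succ, orbitProd_succ, ih, hpow, conj_base_apply, pow_succ', mul_apply]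
    group

theorem yade_conj (a z : Wr K Γ) (γ : Γ) :
    yade (a⁻¹ * z * a) (a.top γ) = (a.base γ)⁻¹ * yade z γ * a.base γ := by
  have h := orbitProd_conj a z γ (orderOf z.top)
  rw [pow_orderOf_eq_one, one_apply] at h
  rw [yade, orderOf_conj_top]
  exact h

section DecidableEq

variable [DecidableEq Γ]

def cycleComponent (w : Wr K Γ) (c : Perm Γ) : Wr K Γ :=
  ⟨fun γ => if c γ ≠ γ then w.base γ else 1, c⟩

def pointComponent (w : Wr K Γ) (γ₀ : Γ) : Wr K Γ :=
  ⟨fun γ => if γ = γ₀ then w.base γ else 1, 1⟩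

theorem terr_cycleComponent (w : Wr K Γ) (c : Perm Γ) : terr (w.cycleComponent c) = psupp c := by
  ext γ
  by_cases h : c γ = γ <;> simp [terr, psupp, cycleComponent, h]

theorem terr_pointComponent {w : Wr K Γ} {γ₀ : Γ} (h : w.base γ₀ ≠ 1) :
    terr (w.pointComponent γ₀) = {γ₀} := by
  ext γ
  by_cases hγ : γ = γ₀ <;> simp [terr, psupp, pointComponent, hγ, h]

theorem pointComponent_conj (a : Wr K Γ) {w : Wr K Γ} {γ₀ : Γ} (hγ₀ : w.top γ₀ = γ₀) :
    a⁻¹ * w.pointComponent γ₀ * a = (a⁻¹ * w * a).pointComponent (a.top γ₀) := by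
  refine conj_eq_iff.2 ⟨by simp [pointComponent], fun γ => ?_⟩
  simp only [pointComponent, one_apply, a.top.injective.eq_iff]
  by_cases hγ : γ = γ₀
  · subst hγ
    rw [if_pos rfl, if_pos rfl, conj_base_apply, hγ₀]
  · simp [hγ]

end DecidableEq

section Fintype

variable [Fintype Γ] [DecidableEq Γ]

theorem mem_wCycles_iff {w z : Wr K Γ} :
    z ∈ wCycles w ↔ (∃ c ∈ w.top.cycleFactorsFinset, z = w.cycleComponent c) ∨
      ∃ γ₀, w.top γ₀ = γ₀ ∧ w.base γ₀ ≠ 1 ∧ z = w.pointComponent γ₀ :=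
  Iff.rfl

theorem load_conj (a z : Wr K Γ) : load (a⁻¹ * z * a) = load z := by
  refine Prod.ext ?_ (orderOf_conj_top a z)
  ext x
  simp only [load, terr_conj, Set.exists_mem_image, yade_conj, isConj_inv_mul_mul_left_iff]

theorem cycleComponent_conj (a : Wr K Γ) {w : Wr K Γ} {c : Perm Γ}
    (hc : c ∈ w.top.cycleFactorsFinset) :
    a⁻¹ * w.cycleComponent c * a = (a⁻¹ * w * a).cycleComponent (a.top * c * a.top⁻¹) := by
  refine conj_eq_iff.2 ⟨rfl, fun γ => ?_⟩
  simp only [cycleComponent, mul_apply, coe_inv, symm_apply_apply, a.top.injective.ne_iff]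
  by_cases hγ : c γ = γ
  · simp [hγ]
  · rw [if_pos hγ, if_pos hγ, (mem_cycleFactorsFinset_iff.1 hc).2 γ (mem_support.2 hγ),
      conj_base_apply]

theorem conj_mem_wCycles (a : Wr K Γ) {w z : Wr K Γ} (hz : z ∈ wCycles w) :
    a⁻¹ * z * a ∈ wCycles (a⁻¹ * w * a) := by
  rcases mem_wCycles_iff.1 hz with ⟨c, hc, rfl⟩ | ⟨γ₀, hfix, hbase, rfl⟩
  · exact Or.inl ⟨_, (mem_cycleFactorsFinset_conj _ _ _).2 hc, cycleComponent_conj a hc⟩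
  · refine Or.inr ⟨a.top γ₀, by rw [conj_top_apply, hfix], ?_, pointComponent_conj a hfix⟩
    rwa [conj_base_apply, hfix, Ne, inv_mul_mul_eq_one_iff]

theorem wCycles_conj (a w : Wr K Γ) :
    wCycles (a⁻¹ * w * a) = (fun z => a⁻¹ * z * a) '' wCycles w := by
  refine Set.Subset.antisymm (fun z hz => ⟨a * z * a⁻¹, ?_, by group⟩) ?_
  · simpa [mul_assoc] using conj_mem_wCycles a⁻¹ hz
  · rintro _ ⟨z, hz, rfl⟩
    exact conj_mem_wCycles a hz

theorem tdecomp_conj (a w : Wr K Γ) (L : Set K × ℕ) :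
    tdecomp (a⁻¹ * w * a) L = (fun Ω => a.top '' Ω) '' tdecomp w L := by
  ext Ω
  simp [tdecomp, wCycles_conj, load_conj, terr_conj, eq_comm, and_assoc]

end Fintype

noncomputable def cycleYade (w : Wr K Γ) (γ : Γ) : K :=
  orbitProd w.top w.base γ (minimalPeriod w.top γ)

theorem cycleYade_of_apply_eq {w : Wr K Γ} {γ : Γ} (hγ : w.top γ = γ) :
    w.cycleYade γ = w.base γ := by
  rw [cycleYade, minimalPeriod_eq_one_iff_isFixedPt.2 hγ, orbitProd_one]

theorem cycleYade_eq_one_of_notMem_terr {w : Wr K Γ} {γ : Γ} (hγ : γ ∉ terr w) :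
    w.cycleYade γ = 1 := by
  simp only [terr, psupp, Set.mem_union, Set.mem_ofPred_eq, not_or, not_not] at hγ
  rw [cycleYade_of_apply_eq hγ.1, hγ.2]

theorem exists_conj_base_of_isConj_cycleYade [Finite Γ] {w v : Wr K Γ} (htop : w.top = v.top)
    (hyade : ∀ γ, IsConj (w.cycleYade γ) (v.cycleYade γ)) :
    ∃ b : Γ → K, (⟨b, 1⟩ : Wr K Γ)⁻¹ * w * ⟨b, 1⟩ = v := by
  obtain ⟨b, hb⟩ := exists_conj_of_isConj_orbitProd (h := w.top) (f := w.base) (e := v.base)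
    fun γ => by simpa only [cycleYade, htop] using hyade γ
  exact ⟨b, conj_eq_iff.2 ⟨by simpa using htop, hb⟩⟩

variable [Fintype Γ] [DecidableEq Γ]

theorem exists_mem_wCycles_of_mem_terr {w : Wr K Γ} {γ : Γ} (hγ : γ ∈ terr w) :
    ∃ z ∈ wCycles w, γ ∈ terr z := by
  by_cases hfix : w.top γ = γ
  · have hbase : w.base γ ≠ 1 := hγ.resolve_left (not_not.2 hfix)
    exact ⟨w.pointComponent γ, Or.inr ⟨γ, hfix, hbase, rfl⟩, by rw [terr_pointComponent hbase]; rfl⟩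
  · refine ⟨w.cycleComponent (w.top.cycleOf γ),
      Or.inl ⟨_, cycleOf_mem_cycleFactorsFinset_iff.2 (mem_support.2 hfix), rfl⟩, ?_⟩
    rw [terr_cycleComponent, psupp, Set.mem_ofPred_eq, cycleOf_apply_self]
    exact hfix

theorem yade_eq_cycleYade {w z : Wr K Γ} (hz : z ∈ wCycles w) {γ : Γ} (hγ : γ ∈ terr z) :
    yade z γ = w.cycleYade γ := by
  rcases mem_wCycles_iff.1 hz with ⟨c, hc, rfl⟩ | ⟨γ₀, hfix, hbase, rfl⟩
  · rw [terr_cycleComponent] at hγ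
    obtain rfl := cycle_is_cycleOf (mem_support.2 hγ) hc
    refine (orbitProd_congr fun j _ => ?_).trans
      (congrArg _ (orderOf_cycleOf_eq_minimalPeriod w.top γ))
    have hmem : ((w.top.cycleOf γ) ^ j) γ ∈ (w.top.cycleOf γ).support :=
      pow_apply_mem_support.2 (mem_support.2 hγ)
    rw [cycleOf_pow_apply_self] at hmem
    simp only [cycleComponent, cycleOf_pow_apply_self]
    rw [if_pos (mem_support.1 hmem)]
  · rw [terr_pointComponent hbase, Set.mem_singleton_iff] at hγ
    subst hγ
    rw [cycleYade_of_apply_eq hfix]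
    simp [yade, pointComponent]

theorem exists_pow_apply_eq_of_mem_terr {w z : Wr K Γ} (hz : z ∈ wCycles w) {γ δ : Γ}
    (hγ : γ ∈ terr z) (hδ : δ ∈ terr z) : ∃ i : ℕ, (z.top ^ i) γ = δ := by
  rcases mem_wCycles_iff.1 hz with ⟨c, hc, rfl⟩ | ⟨γ₀, -, hbase, rfl⟩
  · rw [terr_cycleComponent] at hγ hδ
    exact (mem_cycleFactorsFinset_iff.1 hc).1.exists_pow_eq hγ hδ
  · rw [terr_pointComponent hbase, Set.mem_singleton_iff] at hγ hδ
    exact ⟨0, by rw [hγ, hδ, pow_zero, one_apply]⟩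

theorem isConj_yade_of_mem_terr {w z : Wr K Γ} (hz : z ∈ wCycles w) {γ δ : Γ}
    (hγ : γ ∈ terr z) (hδ : δ ∈ terr z) : IsConj (yade z γ) (yade z δ) := by
  obtain ⟨i, rfl⟩ := exists_pow_apply_eq_of_mem_terr hz hγ hδ
  exact isConj_orbitProd_pow_apply (by rw [pow_orderOf_eq_one, one_apply]) i

theorem isConj_cycleYade_of_mem_terr {w v : Wr K Γ} (hP : tdecomp w = tdecomp v) {γ : Γ}
    (hγ : γ ∈ terr w) : IsConj (w.cycleYade γ) (v.cycleYade γ) := by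
  obtain ⟨z, hz, hγz⟩ := exists_mem_wCycles_of_mem_terr hγ
  obtain ⟨z', hz', hload, hterr⟩ : terr z ∈ tdecomp v (load z) := hP ▸ ⟨z, hz, rfl, rfl⟩
  have hγz' : γ ∈ terr z' := hterr ▸ hγz
  obtain ⟨δ, hδ, hconj⟩ : yade z γ ∈ (load z').1 := hload ▸ ⟨γ, hγz, IsConj.refl _⟩
  rw [← yade_eq_cycleYade hz hγz, ← yade_eq_cycleYade hz' hγz']
  exact hconj.symm.trans (isConj_yade_of_mem_terr hz' hδ hγz')

theorem isConj_cycleYade_of_tdecomp_eq {w v : Wr K Γ} (hP : tdecomp w = tdecomp v) (γ : Γ) :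
    IsConj (w.cycleYade γ) (v.cycleYade γ) := by
  by_cases hw : γ ∈ terr w
  · exact isConj_cycleYade_of_mem_terr hP hw
  by_cases hv : γ ∈ terr v
  · exact (isConj_cycleYade_of_mem_terr hP.symm hv).symm
  rw [cycleYade_eq_one_of_notMem_terr hw, cycleYade_eq_one_of_notMem_terr hv]

end Wr

/-- `w, v ∈ S` are conjugate in `W = K ≀_Γ H` iff there is `t ∈ H`
with `h^t = g` and `P(w)^t = P(v)`. -/
theorem isConj_iff_exists_tdecomp {K Γ : Type*} [Group K] [Fintype Γ] [DecidableEq Γ]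
    (H : Subgroup (Equiv.Perm Γ)) (w v : Wr K Γ) :
    (∃ a : Wr K Γ, a.top ∈ H ∧ a⁻¹ * w * a = v) ↔
      (∃ t ∈ H, t * w.top * t⁻¹ = v.top ∧
        ∀ L : Set K × ℕ, (fun Ω => (⇑t) '' Ω) '' tdecomp w L = tdecomp v L) := by
  constructor
  · rintro ⟨a, haH, rfl⟩
    exact ⟨a.top, haH, rfl, fun L => (tdecomp_conj a w L).symm⟩
  · rintro ⟨t, htH, htop, hP⟩
    let u : Wr K Γ := ⟨1, t⟩
    have hP' : tdecomp (u⁻¹ * w * u) = tdecomp v :=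
      funext fun L => (tdecomp_conj u w L).trans (hP L)
    obtain ⟨b, hb⟩ := exists_conj_base_of_isConj_cycleYade htop (isConj_cycleYade_of_tdecomp_eq hP')
    refine ⟨u * ⟨b, 1⟩, by rwa [mul_top, one_mul], ?_⟩
    rw [← hb]
    group
end

section
/- Let h ∈ H ≤ Sym(Γ) be a nontrivial single cycle, γ₀ ∈ supp(h), x ∈ K. The map φ sending d ∈ K^{supp(h)\{γ₀}} to the wreath cycle ([h,γ₀,x,d]B, h), where [h,γ₀,x,d]B maps γ₀ to x · ([γ₀^{h^{|h|-1}}]d)^{-1} ⋯ ([γ₀^h]d)^{-1}, maps γ ∈ supp(h)\{γ₀} to [γ]d, and all other points to 1_K, is a bijection from K^{supp(h)\{γ₀}} onto the set {w ∈ C(W,h) : [γ₀,w]Yade = x} of wreath cycles with top component h and yade x at γ₀. -/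
set_option linter.unusedSectionVars false

open Wr

namespace Wr

variable {K Γ : Type*} [Group K] [DecidableEq Γ]

/-- The map `B`: given a cycle `h`, a point `γ₀` of its support, a prescribed yade `x`
and `d ∈ K^{supp(h)\{γ₀}}`, produce the base component sending `γ₀` to
`x · ([γ₀^{h^{|h|-1}}]d)⁻¹ ⋯ ([γ₀^h]d)⁻¹`, each `γ ∈ supp(h)\{γ₀}` to `[γ]d`,
and everything else to `1`. -/
noncomputable def Bmap (h : Equiv.Perm Γ) (γ₀ : Γ) (x : K) (d : Γ → K) : Γ → K :=
  fun γ =>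
    if γ = γ₀ then
      x * (((List.range (orderOf h - 1)).map fun i => d ((h ^ (i + 1)) γ₀)).prod)⁻¹
    else if h γ ≠ γ then d γ else 1

end Wr

/-- `d ↦ ([h,γ₀,x,d]B, h)` is a bijection from `K^{supp(h)\{γ₀}}`
onto the set of wreath cycles with top component `h` and yade `x` at `γ₀`. -/
theorem bijOn_Bmap {K Γ : Type*} [Group K] [Fintype Γ] [DecidableEq Γ]
    (H : Subgroup (Equiv.Perm Γ)) (h : Equiv.Perm Γ) (hH : h ∈ H)
    (hc : h.IsCycle) (γ₀ : Γ) (hγ₀ : h γ₀ ≠ γ₀) (x : K) :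
    Set.BijOn (fun d : Γ → K => Wr.mk (Bmap h γ₀ x d) h)
      {d : Γ → K | ∀ γ, ¬(h γ ≠ γ ∧ γ ≠ γ₀) → d γ = 1}
      {w : Wr K Γ | IsWreathCycle w ∧ w.top = h ∧ yade w γ₀ = x} := by
  have hn : 0 < orderOf h := orderOf_pos h
  -- yade of a pair with top `h`
  have hyade : ∀ b : Γ → K, yade (Wr.mk b h) γ₀ =
      b γ₀ * ((List.range (orderOf h - 1)).map fun i => b ((h ^ (i + 1)) γ₀)).prod := by
    intro b
    obtain ⟨m, hm⟩ : ∃ m, orderOf h = m + 1 := ⟨orderOf h - 1, (Nat.succ_pred_eq_of_pos hn).symm⟩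
    unfold yade
    simp only [hm, List.range_succ_eq_map, List.map_cons, List.prod_cons, List.map_map]
    simp [Function.comp_def, Nat.succ_eq_add_one]
  -- powers of h move γ₀, within the order
  have hpowne : ∀ j : ℕ, 0 < j → j < orderOf h → (h ^ j) γ₀ ≠ γ₀ := by
    intro j h0 hj heq
    have h1 : h ^ j = 1 := (hc.pow_eq_one_iff' hγ₀).mpr heq
    have hd := orderOf_dvd_of_pow_eq_one h1
    exact absurd (Nat.le_of_dvd h0 hd) (not_le.mpr hj)
  -- support is invariant
  have hsupp : ∀ j : ℕ, h ((h ^ j) γ₀) ≠ (h ^ j) γ₀ := by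
    intro j heq
    apply hγ₀
    have hcomm : h ^ j * h = h * h ^ j := by rw [← pow_succ, pow_succ']
    have h2 : (h ^ j) (h γ₀) = (h ^ j) γ₀ := by
      calc (h ^ j) (h γ₀) = (h ^ j * h) γ₀ := rfl
        _ = (h * h ^ j) γ₀ := by rw [hcomm]
        _ = (h ^ j) γ₀ := heq
    exact (h ^ j).injective h2
  -- value of Bmap on the orbit terms
  have hBorb : ∀ (d : Γ → K) (i : ℕ), i ∈ List.range (orderOf h - 1) →
      Bmap h γ₀ x d ((h ^ (i + 1)) γ₀) = d ((h ^ (i + 1)) γ₀) := by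
    intro d i hi
    rw [List.mem_range] at hi
    have hne : (h ^ (i + 1)) γ₀ ≠ γ₀ := hpowne (i + 1) (Nat.succ_pos i) (by omega)
    unfold Bmap
    rw [if_neg hne, if_pos (hsupp (i + 1))]
  have hBγ₀ : ∀ d : Γ → K, Bmap h γ₀ x d γ₀ =
      x * (((List.range (orderOf h - 1)).map fun i => d ((h ^ (i + 1)) γ₀)).prod)⁻¹ := by
    intro d; unfold Bmap; rw [if_pos rfl]
  -- yade of the image is x
  have hyadeB : ∀ d : Γ → K, yade (Wr.mk (Bmap h γ₀ x d) h) γ₀ = x := by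
    intro d
    rw [hyade, hBγ₀,
      List.map_congr_left (fun i hi => hBorb d i hi), inv_mul_cancel_right]
  constructor
  · -- MapsTo
    intro d _hd
    refine ⟨?_, rfl, hyadeB d⟩
    refine Or.inr ⟨hc, ?_⟩
    unfold terr
    apply Set.union_eq_self_of_subset_right
    intro γ hγ
    simp only [Set.mem_setOf_eq] at hγ ⊢
    by_cases hγγ₀ : γ = γ₀
    · subst hγγ₀; exact hγ₀
    · by_cases hm : h γ ≠ γ
      · exact hm
      · exfalso; apply hγ; unfold Bmap; rw [if_neg hγγ₀, if_neg hm]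
  constructor
  · -- InjOn
    intro d1 h1 d2 h2 heq
    have hbase : Bmap h γ₀ x d1 = Bmap h γ₀ x d2 := congrArg Wr.base heq
    funext γ
    by_cases hγ : h γ ≠ γ ∧ γ ≠ γ₀
    · have := congrFun hbase γ
      unfold Bmap at this
      rwa [if_neg hγ.2, if_neg hγ.2, if_pos hγ.1, if_pos hγ.1] at this
    · rw [h1 γ hγ, h2 γ hγ]
  · -- SurjOn
    intro w hw
    obtain ⟨hwc, htop, hy⟩ := hw
    obtain ⟨b, t⟩ := w
    simp only at htop
    subst htop
    -- territory equals support
    have hterr : terr (Wr.mk b t) = psupp t := by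
      rcases hwc with ⟨h1, -⟩ | ⟨-, h2⟩
      · exfalso; apply hγ₀; simp only at h1; rw [h1]; rfl
      · exact h2
    have hbz : ∀ γ, t γ = γ → b γ = 1 := by
      intro γ hγ
      by_contra hb
      have hmem : γ ∈ terr (Wr.mk b t) := Or.inr hb
      rw [hterr] at hmem
      exact hmem hγ
    set d : Γ → K := fun γ => if t γ ≠ γ ∧ γ ≠ γ₀ then b γ else 1 with hd
    refine ⟨d, ?_, ?_⟩
    · intro γ hγ; simp only [hd, if_neg hγ]
    · show Wr.mk (Bmap t γ₀ x d) t = Wr.mk b t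
      refine ext' ?_ rfl
      funext γ
      by_cases hγγ₀ : γ = γ₀
      · show Bmap t γ₀ x d γ = b γ
        rw [hγγ₀]
        have hP : (List.map (fun i => d ((t ^ (i + 1)) γ₀)) (List.range (orderOf t - 1))).prod =
            (List.map (fun i => b ((t ^ (i + 1)) γ₀)) (List.range (orderOf t - 1))).prod := by
          congr 1
          apply List.map_congr_left
          intro i hi
          rw [List.mem_range] at hi
          have hne : (t ^ (i + 1)) γ₀ ≠ γ₀ := hpowne (i + 1) (Nat.succ_pos i) (by omega)
          show (if t ((t ^ (i + 1)) γ₀) ≠ (t ^ (i + 1)) γ₀ ∧ (t ^ (i + 1)) γ₀ ≠ γ₀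
              then b ((t ^ (i + 1)) γ₀) else 1) = b ((t ^ (i + 1)) γ₀)
          exact if_pos ⟨hsupp (i + 1), hne⟩
        rw [hBγ₀, hP]
        rw [hyade] at hy
        rw [← hy, mul_inv_cancel_right]
      · by_cases hm : t γ ≠ γ
        · show Bmap t γ₀ x d γ = b γ
          unfold Bmap
          rw [if_neg hγγ₀, if_pos hm]
          exact if_pos ⟨hm, hγγ₀⟩
        · show Bmap t γ₀ x d γ = b γ
          unfold Bmap
          rw [if_neg hγγ₀, if_neg hm, hbz γ (not_not.mp hm)]
end

section
/- Let K be a finite group, h ∈ H a nontrivial single cycle, γ₀ ∈ supp(h), and x ∈ K. Then the number of wreath cycles with top component h and yade x at γ₀ equals |K|^{|h|-1}, where |h| is the order (= cycle length) of h. -/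
set_option linter.unusedSectionVars false

open Wr

/-
The yade condition fixes the ordered product of the base values along the orbit of `γ₀`,
and a wreath cycle with top `h` is exactly a base function supported on `supp h`. Enumerating
`supp h` as `γ₀, γ₀^h, …, γ₀^{h^{|h|-1}}` identifies these wreath cycles with the tuples in
`K^{|h|}` of product `x`; all but the first entry of such a tuple are free, and the first is
then determined.
-/

theorem card_ofFn_prod_eq {G : Type*} [Group G] [Fintype G] {n : ℕ} (hn : n ≠ 0) (x : G) :
    Nat.card {g : Fin n → G // (List.ofFn g).prod = x} = Fintype.card G ^ (n - 1) := by
  obtain ⟨m, rfl⟩ := Nat.exists_eq_succ_of_ne_zero hn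
  have e : {g : Fin (m + 1) → G // (List.ofFn g).prod = x} ≃ (Fin m → G) :=
    { toFun := fun g => Fin.tail g.1
      invFun := fun t => ⟨Fin.cons (x * (List.ofFn t).prod⁻¹) t, by simp [List.ofFn_succ]⟩
      left_inv := by
        rintro ⟨g, hg⟩
        have h0 : x * (List.ofFn (Fin.tail g)).prod⁻¹ = g 0 := by
          rw [← hg, List.ofFn_succ, List.prod_cons]
          exact mul_inv_cancel_right _ _
        exact Subtype.ext (by simp only [h0, Fin.cons_self_tail])
      right_inv := fun t => Fin.tail_cons _ _ }
  rw [Nat.card_congr e, Nat.card_eq_fintype_card, Fintype.card_fun, Fintype.card_fin]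
  rfl

namespace Equiv.Perm.IsCycle

variable {α : Type*} [Fintype α] [DecidableEq α] {σ : Equiv.Perm α} {a : α}

theorem injective_pow_apply (hσ : σ.IsCycle) (ha : σ a ≠ a) :
    Function.Injective fun i : Fin (orderOf σ) => (σ ^ (i : ℕ)) a := by
  have hcyc : σ.IsCycleOn σ.support := by
    rw [coe_support_eq_set_support]
    exact hσ.isCycleOn
  intro i j hij
  have hmod := (hcyc.pow_apply_eq_pow_apply (mem_support.2 ha)).1 hij
  rw [← hσ.orderOf] at hmod
  exact Fin.ext (Nat.ModEq.eq_of_lt_of_lt hmod i.2 j.2)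

noncomputable def finOrderOfEquivSupport (hσ : σ.IsCycle) (ha : σ a ≠ a) :
    Fin (orderOf σ) ≃ σ.support :=
  Equiv.ofBijective (fun i => ⟨(σ ^ (i : ℕ)) a, pow_apply_mem_support.2 (mem_support.2 ha)⟩)
    ((Fintype.bijective_iff_injective_and_card _).2
      ⟨fun _ _ hij => hσ.injective_pow_apply ha (congrArg Subtype.val hij), by
        rw [Fintype.card_fin, Fintype.card_coe, hσ.orderOf]⟩)

end Equiv.Perm.IsCycle

namespace Wr

variable {K Γ : Type*} [Group K]

theorem isWreathCycle_iff_of_isCycle {w : Wr K Γ} (hw : w.top.IsCycle) :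
    IsWreathCycle w ↔ ∀ γ, w.top γ = γ → w.base γ = 1 := by
  rw [IsWreathCycle, terr, Set.union_eq_left, Set.ofPred_subset]
  simp only [hw.ne_one, hw, false_and, true_and, false_or, psupp, Set.mem_ofPred_eq]
  exact forall_congr' fun γ => not_imp_not

theorem yade_eq_prod_ofFn (w : Wr K Γ) (γ : Γ) :
    yade w γ = (List.ofFn fun i : Fin (orderOf w.top) => w.base ((w.top ^ (i : ℕ)) γ)).prod := by
  rw [yade, List.ofFn_eq_map, ← List.map_coe_finRange_eq_range, List.map_map]
  rfl

section

variable [Fintype Γ] [DecidableEq Γ] {h : Equiv.Perm Γ} {γ₀ : Γ}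

noncomputable def wreathCycleYadeEquiv (hc : h.IsCycle) (hγ₀ : h γ₀ ≠ γ₀) (x : K) :
    {w : Wr K Γ | IsWreathCycle w ∧ w.top = h ∧ yade w γ₀ = x} ≃
      {g : Fin (orderOf h) → K // (List.ofFn g).prod = x} :=
  let e := hc.finOrderOfEquivSupport hγ₀
  let extend (g : Fin (orderOf h) → K) (γ : Γ) : K :=
    if hγ : γ ∈ h.support then g (e.symm ⟨γ, hγ⟩) else 1
  have extend_apply (g : Fin (orderOf h) → K) (i : Fin (orderOf h)) : extend g (e i) = g i := by
    simp only [extend, dif_pos (e i).2, Subtype.coe_eta, Equiv.symm_apply_apply]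
  { toFun := fun w => ⟨fun i => w.1.base (e i), by
      obtain ⟨w, -, rfl, hy⟩ := w
      rwa [yade_eq_prod_ofFn] at hy⟩
    invFun := fun g => ⟨⟨extend g.1, h⟩,
      (isWreathCycle_iff_of_isCycle hc).2 fun _ hγ => dif_neg (Equiv.Perm.notMem_support.2 hγ),
      rfl, by
        rw [yade_eq_prod_ofFn]
        exact (congrArg _ (List.ofFn_inj.2 (funext (extend_apply g.1)))).trans g.2⟩
    left_inv := by
      rintro ⟨w, hwc, rfl, -⟩
      refine Subtype.ext (ext' (funext fun γ => ?_) rfl)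
      show extend (fun i => w.base (e i)) γ = w.base γ
      by_cases hγ : γ ∈ w.top.support
      · obtain ⟨i, hi⟩ := e.surjective ⟨γ, hγ⟩
        obtain rfl : (e i : Γ) = γ := congrArg Subtype.val hi
        exact extend_apply (fun i => w.base (e i)) i
      · exact (dif_neg hγ).trans ((isWreathCycle_iff_of_isCycle hc).1 hwc γ
          (Equiv.Perm.notMem_support.1 hγ)).symm
    right_inv := fun g => Subtype.ext (funext (extend_apply g.1)) }

end

end Wr

theorem card_wreathCycles_fixed_yade_general {K Γ : Type*} [Group K] [Fintype K] [Fintype Γ]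
    (h : Equiv.Perm Γ) (hc : h.IsCycle) (γ₀ : Γ) (hγ₀ : h γ₀ ≠ γ₀) (x : K) :
    {w : Wr K Γ | IsWreathCycle w ∧ w.top = h ∧ yade w γ₀ = x}.ncard =
      Fintype.card K ^ (orderOf h - 1) := by
  classical
  rw [← Nat.card_coe_set_eq, Nat.card_congr (wreathCycleYadeEquiv hc hγ₀ x)]
  exact card_ofFn_prod_eq (orderOf_pos h).ne' x

/-- for finite `K`, the number of wreath cycles with top component `h`
and yade `x` at `γ₀` equals `|K|^{|h|-1}`. -/
theorem card_wreathCycles_fixed_yade {K Γ : Type*} [Group K] [Fintype K] [Fintype Γ]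
    (H : Subgroup (Equiv.Perm Γ)) (h : Equiv.Perm Γ) (hH : h ∈ H)
    (hc : h.IsCycle) (γ₀ : Γ) (hγ₀ : h γ₀ ≠ γ₀) (x : K) :
    {w : Wr K Γ | IsWreathCycle w ∧ w.top = h ∧ yade w γ₀ = x}.ncard =
      Fintype.card K ^ (orderOf h - 1) :=
  card_wreathCycles_fixed_yade_general h hc γ₀ hγ₀ x
end

section
/- Let K be finite, 1 ≠ h ∈ H a single cycle, γ ∈ supp(h), and P ⊆ K. Then the proportion of wreath cycles w with top component h whose yade at γ lies in P equals |P|/|K|: |{w ∈ C(W,h) : [γ,w]Yade ∈ P}| / |C(W,h)| = |P|/|K|. -/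
set_option linter.unusedSectionVars false

open Wr

/-! Right multiplication by the base element `single γ k` (value `k` at `γ`, trivial elsewhere)
preserves `C(W,h)` and multiplies the yade at `γ` on the right by `k`: in
`∏_{i<|h|} [γ^{h^i}]f` the new factor `k` lands only at the last index, where `γ^{h^{i+1}} = γ`.
So `K` acts on `C(W,h)` compatibly with the right regular action on the values of the yade, and
`w ↦ (w · single γ (yade w γ)⁻¹, yade w γ)` identifies `C(W,h)` with (fibre over `1`) × `K`, and its
members with yade in `P` with (fibre over `1`) × `P`. -/

section FiberCounting

variable {G K : Type*} [Group G] [Group K] (φ : K →* G) {S : Set G} {f : G → K}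

def sepMemEquivSepEqOneProd (hS : ∀ x ∈ S, ∀ k, x * φ k ∈ S)
    (hf : ∀ x ∈ S, ∀ k, f (x * φ k) = f x * k) (Q : Set K) :
    {x | x ∈ S ∧ f x ∈ Q} ≃ {x | x ∈ S ∧ f x = 1} × Q where
  toFun x := (⟨x * φ (f x)⁻¹, hS _ x.2.1 _, by rw [hf _ x.2.1, mul_inv_cancel]⟩, ⟨f x, x.2.2⟩)
  invFun y := ⟨y.1 * φ y.2, hS _ y.1.2.1 _, by rw [hf _ y.1.2.1, y.1.2.2, one_mul]; exact y.2.2⟩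
  left_inv x := Subtype.ext (by simp)
  right_inv y := by
    have hy : f (y.1 * φ y.2) = y.2 := by rw [hf _ y.1.2.1, y.1.2.2, one_mul]
    ext <;> simp [hy]

theorem ncard_sep_mul_card (hS : ∀ x ∈ S, ∀ k, x * φ k ∈ S)
    (hf : ∀ x ∈ S, ∀ k, f (x * φ k) = f x * k) (Q : Set K) :
    {x | x ∈ S ∧ f x ∈ Q}.ncard * Nat.card K = Q.ncard * S.ncard := by
  have hcardQ := Nat.card_congr (sepMemEquivSepEqOneProd φ hS hf Q)
  have hcardS := Nat.card_congr (sepMemEquivSepEqOneProd φ hS hf Set.univ)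
  simp only [Set.mem_univ, and_true, Set.ofPred_mem_eq, Nat.card_prod, Nat.card_univ] at hcardS
  rw [← Nat.card_coe_set_eq, ← Nat.card_coe_set_eq, ← Nat.card_coe_set_eq, hcardQ, hcardS,
    Nat.card_prod]
  ring

end FiberCounting

namespace Wr

variable {K Γ : Type*} [Group K] [DecidableEq Γ]

def single (γ : Γ) : K →* Wr K Γ where
  toFun k := ⟨Pi.mulSingle γ k, 1⟩
  map_one' := ext' (Pi.mulSingle_one γ) rfl
  map_mul' k k' := ext' (Pi.mulSingle_mul (f := fun _ => K) γ k k') rfl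

theorem top_mul_single (w : Wr K Γ) (γ : Γ) (k : K) : (w * single γ k).top = w.top := rfl

theorem base_mul_single (w : Wr K Γ) (γ : Γ) (k : K) (δ : Γ) :
    (w * single γ k).base δ = w.base δ * (Pi.mulSingle γ k : Γ → K) (w.top δ) := rfl

theorem IsWreathCycle.mul_single {w : Wr K Γ} (hw : IsWreathCycle w) {γ : Γ}
    (hγ : w.top γ ≠ γ) (k : K) : IsWreathCycle (w * single γ k) := by
  rcases hw with ⟨htop, -⟩ | ⟨hcyc, hterr⟩
  · exact absurd (by rw [htop]; rfl) hγ
  rw [IsWreathCycle, terr, top_mul_single]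
  refine Or.inr ⟨hcyc, Set.union_eq_left.2 fun δ hδ => ?_⟩
  by_cases hδγ : w.top δ = γ
  · rintro (hfix : w.top δ = δ)
    exact hγ (by rwa [← hδγ, hfix])
  · rw [Set.mem_ofPred_eq, base_mul_single, Pi.mulSingle_eq_of_ne hδγ, mul_one] at hδ
    rw [← hterr]
    exact Or.inr hδ

theorem yade_mul_single [Finite Γ] {w : Wr K Γ} {γ : Γ} (hc : w.top.IsCycle)
    (hγ : w.top γ ≠ γ) (k : K) : yade (w * single γ k) γ = yade w γ * k := by
  obtain ⟨m, hm⟩ := Nat.exists_eq_add_one_of_ne_zero (orderOf_pos w.top).ne'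
  have hlast : (w.top ^ (m + 1)) γ = γ := by rw [← hm, pow_orderOf_eq_one]; rfl
  have hinner : ∀ i < m, (w.top ^ (i + 1)) γ ≠ γ := fun i hi hfix =>
    pow_ne_one_of_lt_orderOf (x := w.top) (Nat.succ_ne_zero i) (by omega)
      ((hc.pow_eq_one_iff' hγ).2 hfix)
  have hsucc : ∀ i, w.top ((w.top ^ i) γ) = (w.top ^ (i + 1)) γ := fun i => by
    rw [pow_succ', Equiv.Perm.mul_apply]
  simp only [yade, top_mul_single, hm, List.prod_range_succ, base_mul_single, hsucc, hlast,
    Pi.mulSingle_eq_same, ← mul_assoc]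
  congr 3
  refine List.map_congr_left fun i hi => ?_
  rw [Pi.mulSingle_eq_of_ne (hinner i (List.mem_range.1 hi)), mul_one]

end Wr

theorem proportion_yade_mem_general {K Γ : Type*} [Group K] [Fintype K] [Fintype Γ]
    (h : Equiv.Perm Γ)
    (hc : h.IsCycle) (γ : Γ) (hγ : h γ ≠ γ) (P : Set K) :
    {w : Wr K Γ | IsWreathCycle w ∧ w.top = h ∧ yade w γ ∈ P}.ncard *
        Fintype.card K =
      P.ncard * {w : Wr K Γ | IsWreathCycle w ∧ w.top = h}.ncard := by
  classical
  have key := ncard_sep_mul_card (S := {w : Wr K Γ | IsWreathCycle w ∧ w.top = h})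
    (f := (yade · γ)) (single γ)
    (fun w ⟨hw, htop⟩ k => ⟨hw.mul_single (htop ▸ hγ) k, (top_mul_single w γ k).trans htop⟩)
    (fun w ⟨_, htop⟩ k => yade_mul_single (htop ▸ hc) (htop ▸ hγ) k) P
  simpa only [Set.mem_ofPred_eq, and_assoc, Fintype.card_eq_nat_card] using key

/-- the proportion of wreath cycles with top component `h` whose yade
at `γ` lies in `P` is `|P|/|K|` (stated multiplicatively). -/
theorem proportion_yade_mem {K Γ : Type*} [Group K] [Fintype K] [Fintype Γ]
    (H : Subgroup (Equiv.Perm Γ)) (h : Equiv.Perm Γ) (hH : h ∈ H)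
    (hc : h.IsCycle) (γ : Γ) (hγ : h γ ≠ γ) (P : Set K) :
    {w : Wr K Γ | IsWreathCycle w ∧ w.top = h ∧ yade w γ ∈ P}.ncard *
        Fintype.card K =
      P.ncard * {w : Wr K Γ | IsWreathCycle w ∧ w.top = h}.ncard :=
  proportion_yade_mem_general h hc γ hγ P
end
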